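/- On the set Σ^∞ of all nonempty finite and infinite words over a nonempty alphabet Σ, the function p_B(x,y) = 2^{-l(x,y)}, where l(x,y) is the length of the longest common prefix of x and y (l(x,y) = 0 if x₁ ≠ y₁, and 2^{-∞} = 0), is a partial metric, and the partial metric space (Σ^∞, p_B) is complete. -/

import Mathlib

open scoped NNReal ENNReal

/-- A nonempty finite or infinite word over an alphabet `α`: letters are indexed
from `1`, the domain of defined letters is an initial segment. -/
structure PWord (α : Type*) where
  toFun : ℕ → Option α
  map_zero' : toFun 0 = none
  map_one' : (toFun 1).isSome = true
  mono' : ∀ n, 1 ≤ n → (toFun (n + 1)).isSome = true → (toFun n).isSome = true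

/-- The length `l(x) ∈ [1,∞]` of a word. -/
noncomputable def PWord.len {α : Type*} (x : PWord α) : ℕ∞ :=
  ⨆ n ∈ {n : ℕ | (x.toFun n).isSome = true}, (n : ℕ∞)

/-- `l(x,y)`: the length of the longest common prefix of `x` and `y`
(`0` if they have no common prefix). -/
noncomputable def lcp {α : Type*} (x y : PWord α) : ℕ∞ :=
  ⨆ n ∈ {n : ℕ | ∀ k, 1 ≤ k → k ≤ n →
      (x.toFun k).isSome = true ∧ x.toFun k = y.toFun k}, (n : ℕ∞)

/-- `2^{-m}` for `m ∈ ℕ∞`, with `2^{-∞} = 0`. -/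
noncomputable def epow (m : ℕ∞) : ℝ≥0 := WithTop.recTopCoe 0 (fun n => 2⁻¹ ^ n) m

/-- The Baire partial metric `p_B(x,y) = 2^{-l(x,y)}`. -/
noncomputable def pB {α : Type*} (x y : PWord α) : ℝ≥0 := epow (lcp x y)


/-!
Write `l = lcp` and `p_B = epow ∘ lcp`. The common-prefix length is an ultrametric similarity:
`min (l x z) (l z y) ≤ l x y` and `l x y ≤ l x x`. Since `epow` is strictly antitone, this gives
`p_B x y ≤ max (p_B x z) (p_B z y)` and `p_B z z ≤ min (p_B x z) (p_B z y)`, and adding the two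
yields the partial-metric triangle inequality.

For completeness, `epow` is a continuous injection of the compact space `ℕ∞` into `ℝ≥0`, hence a
closed embedding. So if `p_B (x m) (x n) → L`, then `L = epow c` and `l (x m) (x n) → c` in `ℕ∞`.
Finite points of `ℕ∞` are isolated: for finite `c` the common-prefix length is eventually exactly
`c` and `x N` itself is a limit. For `c = ∞`, the diagonal word whose `k`-th letter is the one
eventually shared by all `x n` is a limit.
-/

open Filter Topology

theorem ENat.natCast_le_biSup_iff {s : Set ℕ} (hs : IsLowerSet s) (h0 : 0 ∈ s) {n : ℕ} :
    (n : ℕ∞) ≤ ⨆ m ∈ s, (m : ℕ∞) ↔ n ∈ s := by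
  refine ⟨fun h => ?_, fun hn => le_iSup₂ (f := fun (m : ℕ) (_ : m ∈ s) => (m : ℕ∞)) n hn⟩
  cases n with
  | zero => exact h0
  | succ k =>
    have hk : (k : ℕ∞) < ⨆ m ∈ s, (m : ℕ∞) :=
      (ENat.add_one_le_iff (ENat.natCast_ne_top k)).mp (by exact_mod_cast h)
    obtain ⟨m, hm, hkm⟩ := lt_biSup_iff.mp hk
    exact hs (show k + 1 ≤ m by exact_mod_cast hkm) hm

namespace PWord

variable {α : Type*}

theorem toFun_injective : Function.Injective (toFun : PWord α → ℕ → Option α) := by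
  rintro ⟨⟩ ⟨⟩ h
  congr

theorem isSome_toFun_of_le (x : PWord α) {m n : ℕ} (hm : 1 ≤ m) (hmn : m ≤ n)
    (hn : (x.toFun n).isSome = true) : (x.toFun m).isSome = true := by
  induction n, hmn using Nat.le_induction with
  | base => exact hn
  | succ n hmn ih => exact ih (x.mono' n (hm.trans hmn) hn)

def CommonPrefix (x y : PWord α) (n : ℕ) : Prop :=
  ∀ k, 1 ≤ k → k ≤ n → (x.toFun k).isSome = true ∧ x.toFun k = y.toFun k

theorem commonPrefix_zero (x y : PWord α) : x.CommonPrefix y 0 :=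
  fun _ hk hk0 => absurd (hk.trans hk0) (by omega)

theorem CommonPrefix.mono {x y : PWord α} {m n : ℕ} (h : x.CommonPrefix y n) (hmn : m ≤ n) :
    x.CommonPrefix y m :=
  fun k hk hkm => h k hk (hkm.trans hmn)

theorem CommonPrefix.symm {x y : PWord α} {n : ℕ} (h : x.CommonPrefix y n) :
    y.CommonPrefix x n := fun k hk hkn =>
  ⟨(h k hk hkn).2 ▸ (h k hk hkn).1, (h k hk hkn).2.symm⟩

theorem CommonPrefix.trans {x y z : PWord α} {n : ℕ} (hxy : x.CommonPrefix y n)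
    (hyz : y.CommonPrefix z n) : x.CommonPrefix z n := fun k hk hkn =>
  ⟨(hxy k hk hkn).1, (hxy k hk hkn).2.trans (hyz k hk hkn).2⟩

theorem CommonPrefix.self_left {x y : PWord α} {n : ℕ} (h : x.CommonPrefix y n) :
    x.CommonPrefix x n := fun k hk hkn => ⟨(h k hk hkn).1, rfl⟩

theorem commonPrefix_self_of_isSome (x : PWord α) {n : ℕ} (hn : (x.toFun n).isSome = true) :
    x.CommonPrefix x n := fun _ hk hkn => ⟨x.isSome_toFun_of_le hk hkn hn, rfl⟩

end PWord

open PWord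

section lcp

variable {α : Type*}

theorem natCast_le_lcp_iff {x y : PWord α} {n : ℕ} : (n : ℕ∞) ≤ lcp x y ↔ x.CommonPrefix y n :=
  ENat.natCast_le_biSup_iff (fun _ _ hmn h => PWord.CommonPrefix.mono h hmn) (commonPrefix_zero x y)

theorem lcp_le_lcp_iff {x y z w : PWord α} :
    lcp x y ≤ lcp z w ↔ ∀ n, x.CommonPrefix y n → z.CommonPrefix w n := by
  rw [← ENat.forall_natCast_le_iff_le]
  simp only [natCast_le_lcp_iff]

theorem lcp_comm (x y : PWord α) : lcp x y = lcp y x :=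
  le_antisymm (lcp_le_lcp_iff.mpr fun _ => .symm) (lcp_le_lcp_iff.mpr fun _ => .symm)

theorem lcp_le_lcp_self_left (x y : PWord α) : lcp x y ≤ lcp x x :=
  lcp_le_lcp_iff.mpr fun _ => .self_left

theorem min_lcp_le_lcp (x y z : PWord α) : min (lcp x z) (lcp z y) ≤ lcp x y := by
  refine ENat.forall_natCast_le_iff_le.mp fun n hn => ?_
  rw [le_min_iff, natCast_le_lcp_iff, natCast_le_lcp_iff] at hn
  exact natCast_le_lcp_iff.mpr (hn.1.trans hn.2)

theorem eq_of_lcp_self_le_lcp {x y : PWord α} (hx : lcp x x ≤ lcp x y) (hy : lcp y y ≤ lcp x y) :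
    x = y := by
  refine toFun_injective (funext fun k => ?_)
  rcases Nat.eq_zero_or_pos k with rfl | hk
  · rw [x.map_zero', y.map_zero']
  by_cases hxk : (x.toFun k).isSome
  · exact (lcp_le_lcp_iff.mp hx k (x.commonPrefix_self_of_isSome hxk) k hk le_rfl).2
  by_cases hyk : (y.toFun k).isSome
  · exact ((lcp_le_lcp_iff.mp hy k (y.commonPrefix_self_of_isSome hyk)).symm k hk le_rfl).2.symm
  rw [Option.not_isSome_iff_eq_none.mp hxk, Option.not_isSome_iff_eq_none.mp hyk]

end lcp

theorem epow_natCast (n : ℕ) : epow n = 2⁻¹ ^ n := rfl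

theorem epow_top : epow ⊤ = 0 := rfl

theorem epow_strictAnti : StrictAnti epow := by
  intro a b hab
  lift a to ℕ using hab.ne_top
  induction b using ENat.recTopCoe with
  | top => exact pow_pos (by norm_num) a
  | coe n => exact pow_lt_pow_right_of_lt_one₀ (by norm_num) (by norm_num) (by exact_mod_cast hab)

theorem continuous_epow : Continuous epow := by
  refine continuous_iff_continuousAt.mpr fun a => ?_
  induction a using ENat.recTopCoe with
  | top =>
    refine tendsto_order.mpr ⟨fun _ h => absurd h (not_lt_zero), fun ε hε => ?_⟩
    obtain ⟨n, hn⟩ := exists_pow_lt_of_lt_one hε (by norm_num : (2⁻¹ : ℝ≥0) < 1)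
    exact eventually_of_mem (Ioi_mem_nhds (ENat.natCast_lt_top n))
      fun m hm => (epow_strictAnti hm).trans hn
  | coe n =>
    rw [ContinuousAt, ENat.nhds_natCast]
    exact tendsto_pure_nhds epow _

theorem isClosedEmbedding_epow : IsClosedEmbedding epow :=
  continuous_epow.isClosedEmbedding epow_strictAnti.injective

section pB

variable {α : Type*}

theorem pB_self_le (x y : PWord α) : pB x x ≤ pB x y :=
  epow_strictAnti.antitone (lcp_le_lcp_self_left x y)

theorem pB_comm (x y : PWord α) : pB x y = pB y x := by
  rw [pB, pB, lcp_comm]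

theorem pB_le_max (x y z : PWord α) : pB x y ≤ max (pB x z) (pB z y) :=
  (epow_strictAnti.antitone (min_lcp_le_lcp x y z)).trans_eq (epow_strictAnti.antitone.map_min)

theorem pB_add_pB_self_le (x y z : PWord α) : pB x y + pB z z ≤ pB x z + pB z y :=
  calc pB x y + pB z z ≤ max (pB x z) (pB z y) + min (pB x z) (pB z y) :=
        add_le_add (pB_le_max x y z) (le_min (pB_comm x z ▸ pB_self_le z x) (pB_self_le z y))
    _ = pB x z + pB z y := max_add_min _ _

theorem eq_of_pB_self_eq_pB {x y : PWord α} (hx : pB x x = pB x y) (hy : pB x y = pB y y) :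
    x = y :=
  eq_of_lcp_self_le_lcp (epow_strictAnti.injective hx).le (epow_strictAnti.injective hy).ge

end pB

namespace PWord

variable {α : Type*}

def diagonal (x : ℕ → PWord α) (N : ℕ → ℕ)
    (hN : ∀ k, 1 ≤ k → ((x (N k)).toFun k).isSome = true) : PWord α where
  toFun k := if k = 0 then none else (x (N k)).toFun k
  map_zero' := if_pos rfl
  map_one' := by simpa using hN 1 le_rfl
  mono' n hn _ := by simpa [show n ≠ 0 by omega] using hN n hn

variable {x : ℕ → PWord α} {N : ℕ → ℕ} {hN : ∀ k, 1 ≤ k → ((x (N k)).toFun k).isSome = true}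

theorem diagonal_toFun {k : ℕ} (hk : 1 ≤ k) : (diagonal x N hN).toFun k = (x (N k)).toFun k :=
  if_neg (by omega)

theorem eventually_commonPrefix_diagonal
    (hstable : ∀ k, 1 ≤ k → ∀ n, N k ≤ n → (x (N k)).toFun k = (x n).toFun k) (k : ℕ) :
    ∀ᶠ n in atTop, (diagonal x N hN).CommonPrefix (x n) k := by
  filter_upwards [(Finset.Icc 1 k).eventually_all.mpr fun j _ => eventually_ge_atTop (N j)]
    with n hn j hj hjk
  rw [diagonal_toFun hj]
  exact ⟨hN j hj, hstable j hj n (hn j (Finset.mem_Icc.mpr ⟨hj, hjk⟩))⟩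

end PWord

section completeness

variable {α : Type*}

theorem exists_tendsto_lcp_top {x : ℕ → PWord α}
    (h : Tendsto (fun mn : ℕ × ℕ => lcp (x mn.1) (x mn.2)) atTop (𝓝 ⊤)) :
    ∃ l : PWord α, Tendsto (fun n => lcp l (x n)) atTop (𝓝 ⊤) := by
  have hN (k : ℕ) : ∃ N, ∀ m n, N ≤ m → N ≤ n → (x m).CommonPrefix (x n) k :=
    eventually_atTop_prod_self.mp <| (ENat.tendsto_nhds_top_iff_natCast_lt.mp h k).mono
      fun _ hk => natCast_le_lcp_iff.mp hk.le
  choose N hN using hN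
  have hdef (k : ℕ) (hk : 1 ≤ k) : ((x (N k)).toFun k).isSome = true :=
    (hN k _ _ le_rfl le_rfl k hk le_rfl).1
  have hstable (k : ℕ) (hk : 1 ≤ k) (n : ℕ) (hn : N k ≤ n) : (x (N k)).toFun k = (x n).toFun k :=
    (hN k _ _ le_rfl hn k hk le_rfl).2
  refine ⟨diagonal x N hdef, ENat.tendsto_nhds_top_iff_natCast_lt.mpr fun k => ?_⟩
  filter_upwards [eventually_commonPrefix_diagonal hstable (k + 1)] with n hn
  exact (ENat.add_one_le_iff (ENat.natCast_ne_top k)).mp (by exact_mod_cast natCast_le_lcp_iff.mpr hn)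

theorem exists_lcp_self_eq_and_tendsto_lcp {x : ℕ → PWord α} {c : ℕ∞}
    (h : Tendsto (fun mn : ℕ × ℕ => lcp (x mn.1) (x mn.2)) atTop (𝓝 c)) :
    ∃ l : PWord α, lcp l l = c ∧ Tendsto (fun n => lcp l (x n)) atTop (𝓝 c) := by
  induction c using ENat.recTopCoe with
  | top =>
    obtain ⟨l, hl⟩ := exists_tendsto_lcp_top h
    exact ⟨l, top_le_iff.mp (le_of_tendsto' hl fun n => lcp_le_lcp_self_left l (x n)), hl⟩
  | coe c =>
    rw [ENat.nhds_natCast, tendsto_pure, eventually_atTop_prod_self] at h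
    obtain ⟨N, hN⟩ := h
    refine ⟨x N, hN N N le_rfl le_rfl, tendsto_const_nhds.congr' ?_⟩
    filter_upwards [eventually_ge_atTop N] with n hn using (hN N n le_rfl hn).symm

end completeness

theorem baire_stmt8_general {α : Type*} :
    (∀ x y : PWord α, (pB x x = pB x y ∧ pB x y = pB y y) ↔ x = y) ∧
      (∀ x y : PWord α, pB x x ≤ pB x y) ∧
      (∀ x y : PWord α, pB x y = pB y x) ∧
      (∀ x y z : PWord α, pB x y + pB z z ≤ pB x z + pB z y) ∧
      (∀ (x : ℕ → PWord α) (L : ℝ≥0),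
        Filter.Tendsto (fun mn : ℕ × ℕ => pB (x mn.1) (x mn.2)) Filter.atTop (nhds L) →
        ∃ l : PWord α, pB l l = L ∧
          ∀ ε : ℝ≥0, 0 < ε → ∃ N, ∀ n, N ≤ n → pB l (x n) < pB l l + ε) := by
  refine ⟨fun x y => ⟨fun h => eq_of_pB_self_eq_pB h.1 h.2, by rintro rfl; exact ⟨rfl, rfl⟩⟩,
    pB_self_le, pB_comm, pB_add_pB_self_le, fun x L hL => ?_⟩
  obtain ⟨c, rfl⟩ : L ∈ Set.range epow := isClosedEmbedding_epow.isClosed_range.mem_of_tendsto hL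
    (Eventually.of_forall fun _ => Set.mem_range_self _)
  obtain ⟨l, hll, hl⟩ := exists_lcp_self_eq_and_tendsto_lcp
    (isClosedEmbedding_epow.isInducing.tendsto_nhds_iff.mpr hL)
  have hpB : Tendsto (fun n => pB l (x n)) atTop (𝓝 (epow c)) :=
    (continuous_epow.tendsto c).comp hl
  have hll' : pB l l = epow c := congrArg epow hll
  refine ⟨l, hll', fun ε hε => ?_⟩
  rw [hll']
  exact eventually_atTop.mp (hpB.eventually (gt_mem_nhds (lt_add_of_pos_right _ hε)))

/-- `p_B` is a partial metric on `Σ^∞` and `(Σ^∞, p_B)` is a complete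
partial metric space: whenever `lim_{n,m→∞} p_B(xₙ,xₘ) = L` exists, the sequence
converges in the topology of `p_B` to a word `l` with `p_B(l,l) = L`. -/
theorem baire_stmt8 {α : Type*} [Nonempty α] :
    (∀ x y : PWord α, (pB x x = pB x y ∧ pB x y = pB y y) ↔ x = y) ∧
      (∀ x y : PWord α, pB x x ≤ pB x y) ∧
      (∀ x y : PWord α, pB x y = pB y x) ∧
      (∀ x y z : PWord α, pB x y + pB z z ≤ pB x z + pB z y) ∧
      (∀ (x : ℕ → PWord α) (L : ℝ≥0),
        Filter.Tendsto (fun mn : ℕ × ℕ => pB (x mn.1) (x mn.2)) Filter.atTop (nhds L) →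
        ∃ l : PWord α, pB l l = L ∧
          ∀ ε : ℝ≥0, 0 < ε → ∃ N, ∀ n, N ≤ n → pB l (x n) < pB l l + ε) :=
  baire_stmt8_general
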